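/- (Almost-sure reachability in finite Markov chains) Let Q be a finite nonempty set, κ : Q → PMF Q a transition function, and T ⊆ Q. Call a nonempty set U ⊆ Q a closed recurrent set if the support of κ(q) is contained in U for every q ∈ U and the directed graph on U with edges {(q,q') ∈ U × U | κ(q)(q') > 0} is strongly connected. If every closed recurrent set intersects T, then for every start state s ∈ Q, P_s({ρ | ∃ n, ρ_n ∈ T}) = 1. -/

import Mathlib

open MeasureTheory Filter
open scoped Classical ENNReal

namespace MPP

variable {Q : Type}

/-- Probability that a Markov chain with transition function `κ` traverses the finite
sequence `future` starting from `q`. -/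
noncomputable def chainPathProb (κ : Q → PMF Q) : Q → List Q → ℝ≥0∞
  | _, [] => 1
  | q, q' :: rest => κ q q' * chainPathProb κ q' rest

/-- `μ` is the trajectory measure (Ionescu–Tulcea) of the Markov chain `κ` started at
`q`: it is the (unique) probability measure on `ℕ → Q` (product σ-algebra) giving
every cylinder its product probability. -/
def IsChainTrajMeasure [MeasurableSpace Q] (κ : Q → PMF Q) (q : Q)
    (μ : Measure (ℕ → Q)) : Prop :=
  IsProbabilityMeasure μ ∧
    ∀ (n : ℕ) (f : ℕ → Q),
      μ {ρ | ∀ i ≤ n, ρ i = f i} =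
        if f 0 = q then chainPathProb κ q ((List.range n).map fun i => f (i + 1)) else 0

/-- Energy level of the length-`n` prefix of a play. -/
def EL (w : Q → Q → ℤ) (ρ : ℕ → Q) (n : ℕ) : ℤ :=
  ∑ i ∈ Finset.range n, w (ρ i) (ρ (i + 1))

/-- Energy objective with initial credit `c₀`. -/
def PosEnergy (w : Q → Q → ℤ) (c₀ : ℕ) : Set (ℕ → Q) :=
  {ρ | ∀ n, 0 ≤ (c₀ : ℤ) + EL w ρ n}

/-- A closed recurrent set of a Markov chain: nonempty, closed under transitions, and
strongly connected via positive-probability transitions. -/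
def IsClosedRecurrent (κ : Q → PMF Q) (U : Set Q) : Prop :=
  U.Nonempty ∧ (∀ q ∈ U, (κ q).support ⊆ U) ∧
    ∀ q ∈ U, ∀ q' ∈ U,
      Relation.ReflTransGen (fun a b => a ∈ U ∧ b ∈ U ∧ κ a b ≠ 0) q q'

/-!
From every state the chain can reach a state `b` that is reachable back from each of its own
successors; the states reachable from `b` then form a closed recurrent set, which meets `T`. So
`T` is reachable with positive probability from every state, hence for some `N` the probability
`avoidP N q` of avoiding `T` for `N` steps is at most some `c < 1` uniformly in `q`, and by the
recursion defining `avoidP` the probability of avoiding `T` for `k * N` steps is at most `c ^ k`.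
Decomposing into cylinders, `avoidP n s` bounds the trajectory measure of avoiding `T` up to
time `n`.
-/

section Reachability

open Relation

theorem exists_reflTransGen_forall_reflTransGen_back {α : Type*} [Finite α] (r : α → α → Prop)
    (a : α) : ∃ b, ReflTransGen r a b ∧ ∀ c, ReflTransGen r b c → ReflTransGen r c b := by
  -- a state whose set of successors is minimal is reachable back from each of its successors
  obtain ⟨b, hab, hmin⟩ := Set.Finite.exists_minimalFor (fun b => {c | ReflTransGen r b c})
    {b | ReflTransGen r a b} (Set.toFinite _) ⟨a, .refl⟩
  refine ⟨b, hab, fun c hbc => ?_⟩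
  have hsub : {d | ReflTransGen r c d} ⊆ {d | ReflTransGen r b d} := fun d hcd => hbc.trans hcd
  exact hmin (hab.trans hbc) hsub (ReflTransGen.refl : ReflTransGen r b b)

theorem reflTransGen_restrict_reachable {α : Type*} {r : α → α → Prop} {b c d : α}
    (hbc : ReflTransGen r b c) (hcd : ReflTransGen r c d) :
    ReflTransGen (fun x y => ReflTransGen r b x ∧ ReflTransGen r b y ∧ r x y) c d := by
  induction hcd with
  | refl => exact .refl
  | tail hcx hxy ih =>
    have hbx := hbc.trans hcx
    exact ih.tail ⟨hbx, hbx.tail hxy, hxy⟩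

theorem isClosedRecurrent_reachable (κ : Q → PMF Q) {b : Q}
    (hb : ∀ c, ReflTransGen (fun x y => κ x y ≠ 0) b c →
      ReflTransGen (fun x y => κ x y ≠ 0) c b) :
    IsClosedRecurrent κ {c | ReflTransGen (fun x y => κ x y ≠ 0) b c} :=
  ⟨⟨b, .refl⟩, fun _ hq _ hq' => hq.tail ((PMF.mem_support_iff _ _).1 hq'),
    fun q hq _ hq' => reflTransGen_restrict_reachable hq ((hb q hq).trans hq')⟩

theorem exists_mem_reflTransGen_of_closedRecurrent [Finite Q] (κ : Q → PMF Q) {T : Set Q}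
    (hT : ∀ U : Set Q, IsClosedRecurrent κ U → (U ∩ T).Nonempty) (q : Q) :
    ∃ t ∈ T, ReflTransGen (fun x y => κ x y ≠ 0) q t := by
  obtain ⟨b, hqb, hb⟩ := exists_reflTransGen_forall_reflTransGen_back _ q
  obtain ⟨t, hbt, htT⟩ := hT _ (isClosedRecurrent_reachable κ hb)
  exact ⟨t, htT, hqb.trans hbt⟩

end Reachability

theorem _root_.ENNReal.sum_lt_sum_of_le_of_lt {ι : Type*} {s : Finset ι} {f g : ι → ℝ≥0∞}
    (hle : ∀ i ∈ s, f i ≤ g i) {c : ι} (hc : c ∈ s) (hlt : f c < g c)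
    (hg : ∑ i ∈ s, g i ≠ ∞) : ∑ i ∈ s, f i < ∑ i ∈ s, g i := by
  rw [← Finset.sum_erase_add s f hc, ← Finset.sum_erase_add s g hc]
  have hle' : ∑ i ∈ s.erase c, f i ≤ ∑ i ∈ s.erase c, g i :=
    Finset.sum_le_sum fun i hi => hle i (Finset.mem_of_mem_erase hi)
  have hg' : ∑ i ∈ s.erase c, g i ≠ ∞ :=
    ne_top_of_le_ne_top hg (Finset.sum_le_sum_of_subset (s.erase_subset c))
  exact ENNReal.add_lt_add_of_le_of_lt (ne_top_of_le_ne_top hg' hle') hle' hlt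

theorem _root_.PMF.sum_coe {α : Type*} [Fintype α] (p : PMF α) : ∑ a, p a = 1 := by
  simpa only [tsum_fintype] using p.tsum_coe

section Avoidance

variable [Fintype Q] (κ : Q → PMF Q) (T : Set Q)

/-- Probability of staying outside `T` at times `0, …, n`. -/
noncomputable def avoidP : ℕ → Q → ℝ≥0∞
  | 0, q => if q ∈ T then 0 else 1
  | n + 1, q => if q ∈ T then 0 else ∑ q', κ q q' * avoidP n q'

variable {κ T}

@[simp]
theorem avoidP_of_mem {q : Q} (hq : q ∈ T) (n : ℕ) : avoidP κ T n q = 0 := by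
  cases n <;> simp [avoidP, hq]

@[simp]
theorem avoidP_zero_of_notMem {q : Q} (hq : q ∉ T) : avoidP κ T 0 q = 1 := by
  simp [avoidP, hq]

theorem avoidP_succ_of_notMem {q : Q} (hq : q ∉ T) (n : ℕ) :
    avoidP κ T (n + 1) q = ∑ q', κ q q' * avoidP κ T n q' := by
  simp [avoidP, hq]

theorem avoidP_le_one (n : ℕ) (q : Q) : avoidP κ T n q ≤ 1 := by
  induction n generalizing q with
  | zero => by_cases hq : q ∈ T <;> simp [hq]
  | succ n ih =>
    by_cases hq : q ∈ T
    · simp [hq]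
    calc avoidP κ T (n + 1) q = ∑ q', κ q q' * avoidP κ T n q' := avoidP_succ_of_notMem hq n
      _ ≤ ∑ q', κ q q' := Finset.sum_le_sum fun q' _ => mul_le_of_le_one_right' (ih q')
      _ = 1 := (κ q).sum_coe

theorem avoidP_add_le {n : ℕ} {c : ℝ≥0∞} (hc : ∀ q, avoidP κ T n q ≤ c) (m : ℕ) (q : Q) :
    avoidP κ T (m + n) q ≤ c * avoidP κ T m q := by
  induction m generalizing q with
  | zero => by_cases hq : q ∈ T <;> simp [hq, hc]
  | succ m ih =>
    by_cases hq : q ∈ T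
    · simp [hq]
    rw [Nat.add_right_comm, avoidP_succ_of_notMem hq, avoidP_succ_of_notMem hq, Finset.mul_sum]
    exact Finset.sum_le_sum fun q' _ => (mul_le_mul_right (ih q') _).trans_eq (mul_left_comm _ _ _)

theorem avoidP_mul_le_pow {n : ℕ} {c : ℝ≥0∞} (hc : ∀ q, avoidP κ T n q ≤ c) (k : ℕ) (q : Q) :
    avoidP κ T (k * n) q ≤ c ^ k := by
  induction k generalizing q with
  | zero => simpa using avoidP_le_one 0 q
  | succ k ih =>
    calc avoidP κ T ((k + 1) * n) q = avoidP κ T (k * n + n) q := by rw [Nat.succ_mul]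
      _ ≤ c * avoidP κ T (k * n) q := avoidP_add_le hc _ q
      _ ≤ c * c ^ k := mul_le_mul_right (ih q) c
      _ = c ^ (k + 1) := (pow_succ' c k).symm

theorem avoidP_antitone (q : Q) : Antitone fun n => avoidP κ T n q := by
  refine antitone_nat_of_succ_le fun n => ?_
  simpa using avoidP_add_le (fun q => avoidP_le_one 1 q) n q

theorem exists_avoidP_lt_one_of_reflTransGen {q t : Q} (ht : t ∈ T)
    (hqt : Relation.ReflTransGen (fun x y => κ x y ≠ 0) q t) : ∃ n, avoidP κ T n q < 1 := by
  induction hqt using Relation.ReflTransGen.head_induction_on with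
  | refl => exact ⟨0, by simp [ht]⟩
  | @head q c hqc _ ih =>
    obtain ⟨n, hn⟩ := ih
    refine ⟨n + 1, ?_⟩
    by_cases hq : q ∈ T
    · simp [hq]
    rw [avoidP_succ_of_notMem hq, ← (κ q).sum_coe]
    refine ENNReal.sum_lt_sum_of_le_of_lt
      (fun q' _ => mul_le_of_le_one_right' (avoidP_le_one n q')) (Finset.mem_univ c) ?_
      (by simp [(κ q).sum_coe])
    simpa only [mul_one] using ENNReal.mul_lt_mul_right hqc (PMF.apply_ne_top _ _) hn

theorem iInf_avoidP_eq_zero (hT : ∀ U : Set Q, IsClosedRecurrent κ U → (U ∩ T).Nonempty)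
    (q : Q) : ⨅ n, avoidP κ T n q = 0 := by
  have hlt : ∀ q, ∀ᶠ n in Filter.atTop, avoidP κ T n q < 1 := fun q => by
    obtain ⟨t, ht, hqt⟩ := exists_mem_reflTransGen_of_closedRecurrent κ hT q
    obtain ⟨n, hn⟩ := exists_avoidP_lt_one_of_reflTransGen ht hqt
    exact Filter.eventually_atTop.2 ⟨n, fun m hm => (avoidP_antitone q hm).trans_lt hn⟩
  obtain ⟨N, hN⟩ := (Filter.eventually_all.2 hlt).exists
  set c := Finset.univ.sup (avoidP κ T N)
  have hc : c < 1 := (Finset.sup_lt_iff zero_lt_one).2 fun q _ => hN q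
  refine le_antisymm (ge_of_tendsto' (ENNReal.tendsto_pow_atTop_nhds_zero_of_lt_one hc)
    fun k => (iInf_le _ (k * N)).trans ?_) bot_le
  exact avoidP_mul_le_pow (fun q => Finset.le_sup (Finset.mem_univ q)) k q

theorem avoidP_eq_sum_chainPathProb (n : ℕ) (q : Q) :
    avoidP κ T n q =
      ∑ l : Fin n → Q, if q ∉ T ∧ ∀ i, l i ∉ T then chainPathProb κ q (List.ofFn l) else 0 := by
  induction n generalizing q with
  | zero => by_cases hq : q ∈ T <;> simp [hq, chainPathProb]
  | succ n ih =>
    by_cases hq : q ∈ T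
    · simp [hq]
    rw [avoidP_succ_of_notMem hq, ← (Fin.consEquiv fun _ => Q).sum_comp, Fintype.sum_prod_type]
    refine Finset.sum_congr rfl fun a _ => ?_
    rw [ih, Finset.mul_sum]
    refine Finset.sum_congr rfl fun l _ => ?_
    by_cases ha : a ∈ T <;> by_cases hl : ∀ i, l i ∉ T <;>
      simp [Fin.forall_fin_succ, List.ofFn_succ, chainPathProb, hq, ha, hl]

theorem map_range_eq_ofFn {α : Type*} {n : ℕ} (w : Fin (n + 1) → α) :
    (List.range n).map (fun i => w (Fin.ofNat (n + 1) (i + 1))) =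
      List.ofFn fun j : Fin n => w j.succ := by
  apply List.ext_getElem (by simp)
  intro i hi _
  simp only [List.getElem_map, List.getElem_ofFn]
  congr 1
  ext
  simp [Nat.mod_eq_of_lt (show i + 1 < n + 1 by simpa using hi)]

theorem measure_avoid_le_avoidP [MeasurableSpace Q] {s : Q} {μ : Measure (ℕ → Q)}
    (hμ : IsChainTrajMeasure κ s μ) (n : ℕ) :
    μ {ρ | ∀ i ≤ n, ρ i ∉ T} ≤ avoidP κ T n s := by
  let cylinder (w : Fin (n + 1) → Q) : Set (ℕ → Q) := {ρ | ∀ i ≤ n, ρ i = w (Fin.ofNat (n + 1) i)}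
  let avoiding := Finset.univ.filter fun w : Fin (n + 1) → Q => ∀ i, w i ∉ T
  have hcover : {ρ : ℕ → Q | ∀ i ≤ n, ρ i ∉ T} ⊆ ⋃ w ∈ avoiding, cylinder w := by
    intro ρ hρ
    simp only [Set.mem_iUnion]
    refine ⟨fun j => ρ j, ?_, fun i hi => ?_⟩
    · simpa [avoiding] using fun j : Fin (n + 1) => hρ j (Nat.lt_succ_iff.1 j.2)
    · simp [Nat.mod_eq_of_lt (Nat.lt_succ_of_le hi)]
  calc μ {ρ | ∀ i ≤ n, ρ i ∉ T}
      ≤ ∑ w ∈ avoiding, μ (cylinder w) :=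
        (measure_mono hcover).trans (measure_biUnion_finset_le _ _)
    _ = ∑ w ∈ avoiding,
          if w 0 = s then chainPathProb κ s (List.ofFn fun j : Fin n => w j.succ) else 0 := by
      refine Finset.sum_congr rfl fun w _ => ?_
      rw [hμ.2, map_range_eq_ofFn]
      rfl
    _ = avoidP κ T n s := by
      rw [avoidP_eq_sum_chainPathProb, Finset.sum_filter, ← (Fin.consEquiv fun _ => Q).sum_comp,
        Fintype.sum_prod_type, Finset.sum_comm]
      refine Finset.sum_congr rfl fun l _ => ?_
      rw [Fintype.sum_eq_single s fun a ha => by simp [ha]]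
      simp [Fin.forall_fin_succ]

end Avoidance

theorem chain_reach_of_closed_recurrent_general [Fintype Q]
    [MeasurableSpace Q]
    (κ : Q → PMF Q) (T : Set Q)
    (hT : ∀ U : Set Q, IsClosedRecurrent κ U → (U ∩ T).Nonempty)
    (s : Q) (μ : Measure (ℕ → Q)) (hμ : IsChainTrajMeasure κ s μ) :
    μ {ρ | ∃ n, ρ n ∈ T} = 1 := by
  have := hμ.1
  have hnever : μ {ρ | ∃ n, ρ n ∈ T}ᶜ = 0 := by
    refine le_antisymm ?_ bot_le
    rw [← iInf_avoidP_eq_zero hT s]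
    refine le_iInf fun n => (measure_mono ?_).trans (measure_avoid_le_avoidP hμ n)
    exact fun ρ hρ i _ hiT => hρ ⟨i, hiT⟩
  refine le_antisymm prob_le_one ?_
  simpa [hnever] using measure_univ_le_add_compl (μ := μ) {ρ | ∃ n, ρ n ∈ T}

/-- Almost-sure reachability in finite Markov chains: if every closed recurrent set
intersects `T`, then from every start state the chain reaches `T` with
probability 1. -/
theorem chain_reach_of_closed_recurrent [Fintype Q] [Nonempty Q]
    [MeasurableSpace Q] [MeasurableSingletonClass Q]
    (κ : Q → PMF Q) (T : Set Q)
    (hT : ∀ U : Set Q, IsClosedRecurrent κ U → (U ∩ T).Nonempty)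
    (s : Q) (μ : Measure (ℕ → Q)) (hμ : IsChainTrajMeasure κ s μ) :
    μ {ρ | ∃ n, ρ n ∈ T} = 1 :=
  chain_reach_of_closed_recurrent_general κ T hT s μ hμ

end MPP
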